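/- arXiv:2310.10231 — 2 statements merged into one kernel-verified Lean document; each statement's English description precedes it below -/
import Mathlib

section
/- (Corollary 4.2: large-intensity limit of the density.) Fix t > 0 and x with min(v₂t, 0) < x < v₁t, x ≠ 0 and x ≠ v₂t. Then for each j ∈ {1,2}, the reset density p̃(x,t|v_j), regarded as a function of the velocity-change intensity λ, satisfies lim_{λ→+∞} p̃(x,t|v_j) = 1_{v₂t<x<v₁t}·e^{−ξt}/((v₁−v₂)t) + I(x,t)·(ξ/(v₁−v₂))·Γ^ξ(x,t), where Γ^ξ(x,t) = Γ(0, M_x·ξ, t·ξ) if v₂ < 0 < v₁ and Γ^ξ(x,t) = Γ(0, (x/v₁)ξ, m_{x,t}·ξ) if 0 < v₂ < v₁. In particular the limit does not depend on j. -/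
open MeasureTheory Real Filter Topology Set

noncomputable section

namespace TelegraphReset

open Classical in
/-- Real-valued indicator of a proposition. -/
def ind (P : Prop) : ℝ := if P then 1 else 0

/-- Generalized incomplete gamma function `Γ(0, z₀, z₁) = ∫_{z₀}^{z₁} u⁻¹ e^{-u} du`. -/
def iGamma (z₀ z₁ : ℝ) : ℝ := ∫ u in z₀..z₁, u⁻¹ * Real.exp (-u)

/-- Upper incomplete gamma function `Γ(0, a) = ∫_a^∞ u⁻¹ e^{-u} du`. -/
def uGamma (a : ℝ) : ℝ := ∫ u in Set.Ioi a, u⁻¹ * Real.exp (-u)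

/-- `τ(x,t) = (x - v₂ t)/(v₁ - v₂)`. -/
def tauF (v₁ v₂ x t : ℝ) : ℝ := (x - v₂ * t) / (v₁ - v₂)

/-- The two velocities, indexed by `1` and `2`. -/
def vel (v₁ v₂ : ℝ) : ℕ → ℝ := fun n => if n = 1 then v₁ else v₂

/-- `Γ_λ^ξ(x,t)`, defined piecewise according to the sign of `v₂`. -/
def GamL (v₁ v₂ lam xi x t : ℝ) : ℝ :=
  if v₂ < 0 then iGamma ((max (x / v₁) (x / v₂) + 1 / lam) * xi) ((t + 1 / lam) * xi)
  else iGamma ((x / v₁ + 1 / lam) * xi) ((min (x / v₂) t + 1 / lam) * xi)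

/-- `Θ_λ^ξ(x,t)`, defined piecewise according to the sign of `v₂`. -/
def Theta (v₁ v₂ lam xi x t : ℝ) : ℝ :=
  if v₂ < 0 then
    Real.exp (-(xi * max (x / v₁) (x / v₂))) / (1 + lam * max (x / v₁) (x / v₂))
      - Real.exp (-(xi * t)) / (1 + lam * t)
  else
    Real.exp (-(xi * (x / v₁))) / (1 + lam * (x / v₁))
      - Real.exp (-(xi * min (x / v₂) t)) / (1 + lam * min (x / v₂) t)

/-- Closed-form sub-density `P_{j,j}(x,t)` (Eq. (21)). -/
def Pss (v₁ v₂ lam xi : ℝ) (j : ℕ) (x t : ℝ) : ℝ :=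
  ind (v₂ * t < x ∧ x < v₁ * t) * Real.exp (-(xi * t)) * lam ^ 2 *
      tauF v₁ v₂ x t ^ (2 - j) * (t - tauF v₁ v₂ x t) ^ (j - 1) /
      ((v₁ - v₂) * (1 + lam * t) ^ 2)
  + Real.sign (vel v₁ v₂ j) * ind (0 < x / vel v₁ v₂ j ∧ x / vel v₁ v₂ j < t) * xi *
      Real.exp (-(xi * (x / vel v₁ v₂ j))) / (vel v₁ v₂ j + lam * x)
  + ind (min (v₂ * t) 0 < x ∧ x < v₁ * t) *
      ((-1 : ℝ) ^ (3 - j) * (xi * (vel v₁ v₂ (3 - j) + lam * x) / (v₁ - v₂) ^ 2) *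
          Theta v₁ v₂ lam xi x t
        + (-1 : ℝ) ^ j * (xi * Real.exp (xi / lam) / (v₁ - v₂) ^ 2) *
            (vel v₁ v₂ (3 - j) * (lam + xi) / lam + x * xi) * GamL v₁ v₂ lam xi x t)

/-- Closed-form sub-density `P_{3-j,j}(x,t)` (Eq. (22)). -/
def Pos (v₁ v₂ lam xi : ℝ) (j : ℕ) (x t : ℝ) : ℝ :=
  ind (v₂ * t < x ∧ x < v₁ * t) * Real.exp (-(xi * t)) * lam *
      (1 + lam * tauF v₁ v₂ x t ^ (j - 1) * (t - tauF v₁ v₂ x t) ^ (2 - j)) /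
      ((v₁ - v₂) * (1 + lam * t) ^ 2)
  + ind (min (v₂ * t) 0 < x ∧ x < v₁ * t) *
      ((-1 : ℝ) ^ j * (xi * (vel v₁ v₂ (3 - j) + lam * x) / (v₁ - v₂) ^ 2) *
          Theta v₁ v₂ lam xi x t
        + (-1 : ℝ) ^ (3 - j) * (xi * Real.exp (xi / lam) / (v₁ - v₂) ^ 2) *
            (vel v₁ v₂ j * (lam + xi) / lam + x * xi
              + (-1 : ℝ) ^ j * xi * (v₁ - v₂) / lam) * GamL v₁ v₂ lam xi x t)

/-- Closed-form reset density `p̃(x,t|v_j)` (Eq. (37)). -/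
def pTil (v₁ v₂ lam xi : ℝ) (j : ℕ) (x t : ℝ) : ℝ :=
  Real.sign (vel v₁ v₂ j) * ind (0 < x / vel v₁ v₂ j ∧ x / vel v₁ v₂ j < t) * xi *
      Real.exp (-(xi * (x / vel v₁ v₂ j))) / (vel v₁ v₂ j + lam * x)
  + ind (v₂ * t < x ∧ x < v₁ * t) * lam * Real.exp (-(xi * t)) /
      ((v₁ - v₂) * (1 + lam * t))
  + ind (min (v₂ * t) 0 < x ∧ x < v₁ * t) *
      (xi * Real.exp (xi / lam) / (v₁ - v₂)) * GamL v₁ v₂ lam xi x t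

/-- First moment `E_j[X̃(t)]` (Eq. (54)). -/
def Emom (v₁ v₂ lam xi : ℝ) (j : ℕ) (t : ℝ) : ℝ :=
  (1 - Real.exp (-(xi * t))) *
      ((v₁ + v₂) / (2 * xi) + (vel v₁ v₂ j - vel v₁ v₂ (3 - j)) / (2 * lam))
  - xi * Real.exp (xi / lam) * (vel v₁ v₂ j - vel v₁ v₂ (3 - j)) / (2 * lam ^ 2) *
      iGamma (xi / lam) (xi / lam * (1 + lam * t))
  + t * Real.exp (-(xi * t)) * (vel v₁ v₂ j - vel v₁ v₂ (3 - j)) / (2 * (1 + lam * t))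

/-- Second moment `E_j[X̃²(t)]` (Eq. (55)). -/
def Smom (v₁ v₂ lam xi : ℝ) (j : ℕ) (t : ℝ) : ℝ :=
  (1 - Real.exp (-(xi * t))) *
      (2 * (v₁ ^ 2 + v₁ * v₂ + v₂ ^ 2) / (3 * xi ^ 2)
        + (2 * vel v₁ v₂ j ^ 2 - v₁ * v₂ - vel v₁ v₂ (3 - j) ^ 2) / (3 * lam) *
            (1 / xi - 1 / lam))
  - t * Real.exp (-(xi * t)) *
      (2 * (v₁ ^ 2 + v₁ * v₂ + v₂ ^ 2) / (3 * xi)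
        + (2 * vel v₁ v₂ j ^ 2 - v₁ * v₂ - vel v₁ v₂ (3 - j) ^ 2) /
            (3 * lam * (1 + lam * t)))
  + xi * Real.exp (xi / lam) *
      (2 * vel v₁ v₂ j ^ 2 - v₁ * v₂ - vel v₁ v₂ (3 - j) ^ 2) / (3 * lam ^ 3) *
      iGamma (xi / lam) (xi / lam * (1 + lam * t))

/-- First moment of the reset-free process. -/
def m1 (v₁ v₂ lam : ℝ) (j : ℕ) (t : ℝ) : ℝ :=
  (v₁ + v₂) * t / 2 + (vel v₁ v₂ j - vel v₁ v₂ (3 - j)) * t / (2 * (1 + lam * t))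

/-- Second moment of the reset-free process (Eq. (63)). -/
def m2 (v₁ v₂ lam : ℝ) (j : ℕ) (t : ℝ) : ℝ :=
  t ^ 2 * (3 * vel v₁ v₂ j ^ 2 + lam * t * (v₁ ^ 2 + v₁ * v₂ + v₂ ^ 2)) /
    (3 * (1 + lam * t))

/-!
As `λ → ∞`, the singular term, the only one depending on `j`, decays like `1 / λ`
because `x ≠ 0`; the factor `λ / (1 + λ t)` tends to `1 / t` and `e^{ξ/λ} → 1`.
Finally `Γ_λ^ξ(x,t) → Γ^ξ(x,t)`: under the sign assumptions on `v₁, v₂` the endpoints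
of the incomplete gamma integral converge to positive limits, and on `(0, ∞)` the
integral depends continuously on its endpoints, being a difference of values of a
primitive of `u⁻¹ e^{-u}`.
-/

lemma continuousOn_inv_mul_exp_neg :
    ContinuousOn (fun u : ℝ => u⁻¹ * Real.exp (-u)) (Ioi 0) :=
  (continuousOn_inv₀.mono fun _ hu => ne_of_gt hu).mul (by fun_prop)

lemma intervalIntegrable_inv_mul_exp_neg {z : ℝ} (hz : 0 < z) :
    IntervalIntegrable (fun u : ℝ => u⁻¹ * Real.exp (-u)) volume 1 z :=
  (continuousOn_inv_mul_exp_neg.mono fun _ hu =>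
    lt_of_lt_of_le (lt_min one_pos hz) hu.1).intervalIntegrable

lemma continuousOn_integral_one_inv_mul_exp_neg :
    ContinuousOn (fun y => ∫ u in (1 : ℝ)..y, u⁻¹ * Real.exp (-u)) (Ioi 0) := fun y hy =>
  (intervalIntegral.integral_hasDerivAt_right (intervalIntegrable_inv_mul_exp_neg hy)
    (continuousOn_inv_mul_exp_neg.stronglyMeasurableAtFilter isOpen_Ioi y hy)
    (continuousOn_inv_mul_exp_neg.continuousAt (isOpen_Ioi.mem_nhds hy)))
    |>.continuousAt.continuousWithinAt

lemma iGamma_eq_sub {z₀ z₁ : ℝ} (h₀ : 0 < z₀) (h₁ : 0 < z₁) :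
    iGamma z₀ z₁ = (∫ u in (1 : ℝ)..z₁, u⁻¹ * Real.exp (-u))
      - ∫ u in (1 : ℝ)..z₀, u⁻¹ * Real.exp (-u) :=
  (intervalIntegral.integral_interval_sub_left (intervalIntegrable_inv_mul_exp_neg h₁)
    (intervalIntegrable_inv_mul_exp_neg h₀)).symm

lemma tendsto_iGamma {α : Type*} {l : Filter α} {f g : α → ℝ} {a b : ℝ}
    (hf : Tendsto f l (𝓝 a)) (hg : Tendsto g l (𝓝 b)) (ha : 0 < a) (hb : 0 < b) :
    Tendsto (fun y => iGamma (f y) (g y)) l (𝓝 (iGamma a b)) := by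
  have hF := continuousOn_integral_one_inv_mul_exp_neg
  rw [iGamma_eq_sub ha hb]
  refine ((hF.continuousAt (Ioi_mem_nhds hb)).tendsto.comp hg).sub
    ((hF.continuousAt (Ioi_mem_nhds ha)).tendsto.comp hf) |>.congr' ?_
  filter_upwards [hf.eventually (Ioi_mem_nhds ha), hg.eventually (Ioi_mem_nhds hb)]
    with y hfy hgy
  exact (iGamma_eq_sub hfy hgy).symm

lemma tendsto_iGamma_add_one_div_atTop {xi a b : ℝ} (hxi : 0 < xi) (ha : 0 < a) (hb : 0 < b) :
    Tendsto (fun lam : ℝ => iGamma ((a + 1 / lam) * xi) ((b + 1 / lam) * xi)) atTop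
      (𝓝 (iGamma (a * xi) (b * xi))) := by
  have hinv : Tendsto (fun lam : ℝ => 1 / lam) atTop (𝓝 0) :=
    tendsto_const_nhds.div_atTop tendsto_id
  have hend : ∀ c : ℝ, Tendsto (fun lam : ℝ => (c + 1 / lam) * xi) atTop (𝓝 (c * xi)) :=
    fun c => by simpa using (hinv.const_add c).mul_const xi
  exact tendsto_iGamma (hend a) (hend b) (mul_pos ha hxi) (mul_pos hb hxi)

lemma tendsto_GamL_atTop {v₁ v₂ xi x t : ℝ} (hxi : 0 < xi)
    (hcase : (v₂ < 0 ∧ 0 < v₁) ∨ (0 < v₂ ∧ v₂ < v₁)) (ht : 0 < t)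
    (hx : min (v₂ * t) 0 < x) (hx₀ : x ≠ 0) :
    Tendsto (fun lam => GamL v₁ v₂ lam xi x t) atTop
      (𝓝 (if v₂ < 0 then iGamma (max (x / v₁) (x / v₂) * xi) (t * xi)
        else iGamma (x / v₁ * xi) (min (x / v₂) t * xi))) := by
  unfold GamL
  split_ifs with hv₂
  · have hv₁ : 0 < v₁ := (hcase.resolve_right fun h => (h.1.trans hv₂).false).2
    refine tendsto_iGamma_add_one_div_atTop hxi ?_ ht
    rcases hx₀.lt_or_gt with hxn | hxp
    · exact lt_max_of_lt_right (div_pos_of_neg_of_neg hxn hv₂)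
    · exact lt_max_of_lt_left (div_pos hxp hv₁)
  · obtain ⟨hv₂pos, hv⟩ := hcase.resolve_left fun h => hv₂ h.1
    have hxp : 0 < x := by rwa [min_eq_right (mul_pos hv₂pos ht).le] at hx
    exact tendsto_iGamma_add_one_div_atTop hxi (div_pos hxp (hv₂pos.trans hv))
      (lt_min (div_pos hxp hv₂pos) ht)

lemma tendsto_div_add_mul_atTop_zero (c v : ℝ) {x : ℝ} (hx : x ≠ 0) :
    Tendsto (fun lam : ℝ => c / (v + lam * x)) atTop (𝓝 0) := by
  rcases hx.lt_or_gt with hxn | hxp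
  · exact tendsto_const_nhds.div_atBot
      (tendsto_atBot_add_const_left _ v (tendsto_id.atTop_mul_const_of_neg hxn))
  · exact tendsto_const_nhds.div_atTop
      (tendsto_atTop_add_const_left _ v (tendsto_id.atTop_mul_const hxp))

lemma tendsto_div_one_add_mul_atTop {t : ℝ} (ht : t ≠ 0) :
    Tendsto (fun lam : ℝ => lam / (1 + lam * t)) atTop (𝓝 t⁻¹) := by
  have h := (tendsto_inv_atTop_zero.add_const t).inv₀ (by simpa using ht)
  rw [zero_add] at h
  refine h.congr' ?_
  filter_upwards [eventually_ne_atTop (0 : ℝ)] with lam hlam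
  field_simp

lemma tendsto_exp_div_atTop (c : ℝ) :
    Tendsto (fun lam : ℝ => Real.exp (c / lam)) atTop (𝓝 1) := by
  simpa [Function.comp_def] using
    (Real.continuous_exp.tendsto 0).comp (tendsto_const_nhds.div_atTop tendsto_id)

theorem large_intensity_limit_general (v₁ v₂ xi : ℝ) (hxi : 0 < xi)
    (hcase : (v₂ < 0 ∧ 0 < v₁) ∨ (0 < v₂ ∧ v₂ < v₁)) :
    ∀ j : ℕ, (j = 1 ∨ j = 2) → ∀ t : ℝ, 0 < t → ∀ x : ℝ,
      min (v₂ * t) 0 < x → x < v₁ * t → x ≠ 0 → x ≠ v₂ * t →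
      Tendsto (fun lam => pTil v₁ v₂ lam xi j x t) atTop
        (𝓝 (ind (v₂ * t < x ∧ x < v₁ * t) * Real.exp (-(xi * t)) / ((v₁ - v₂) * t)
          + ind (min (v₂ * t) 0 < x ∧ x < v₁ * t) * (xi / (v₁ - v₂)) *
              (if v₂ < 0 then iGamma (max (x / v₁) (x / v₂) * xi) (t * xi)
                else iGamma (x / v₁ * xi) (min (x / v₂) t * xi)))) := by
  intro j _ t ht x hx _ hx₀ _
  have hA := tendsto_div_add_mul_atTop_zero
    (Real.sign (vel v₁ v₂ j) * ind (0 < x / vel v₁ v₂ j ∧ x / vel v₁ v₂ j < t) * xi *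
      Real.exp (-(xi * (x / vel v₁ v₂ j)))) (vel v₁ v₂ j) hx₀
  have hB := (tendsto_div_one_add_mul_atTop ht.ne').const_mul
    (ind (v₂ * t < x ∧ x < v₁ * t) * Real.exp (-(xi * t)) / (v₁ - v₂))
  have hC := (((tendsto_exp_div_atTop xi).const_mul xi).div_const (v₁ - v₂)).const_mul
    (ind (min (v₂ * t) 0 < x ∧ x < v₁ * t)) |>.mul (tendsto_GamL_atTop hxi hcase ht hx hx₀)
  convert (hA.add hB).add hC using 2
  · rw [pTil, div_mul_eq_div_div]
    ring
  · rw [div_mul_eq_div_div, mul_one]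
    ring

/-- Corollary 4.2: large-intensity limit of the reset density; the limit does
not depend on the initial velocity `v_j`. -/
theorem large_intensity_limit (v₁ v₂ xi : ℝ) (hxi : 0 < xi)
    (hv : v₂ < v₁) (hv1 : v₁ ≠ 0) (hv2 : v₂ ≠ 0)
    (hcase : (v₂ < 0 ∧ 0 < v₁) ∨ (0 < v₂ ∧ v₂ < v₁)) :
    ∀ j : ℕ, (j = 1 ∨ j = 2) → ∀ t : ℝ, 0 < t → ∀ x : ℝ,
      min (v₂ * t) 0 < x → x < v₁ * t → x ≠ 0 → x ≠ v₂ * t →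
      Tendsto (fun lam => pTil v₁ v₂ lam xi j x t) atTop
        (𝓝 (ind (v₂ * t < x ∧ x < v₁ * t) * Real.exp (-(xi * t)) / ((v₁ - v₂) * t)
          + ind (min (v₂ * t) 0 < x ∧ x < v₁ * t) * (xi / (v₁ - v₂)) *
              (if v₂ < 0 then iGamma (max (x / v₁) (x / v₂) * xi) (t * xi)
                else iGamma (x / v₁ * xi) (min (x / v₂) t * xi)))) :=
  large_intensity_limit_general v₁ v₂ xi hxi hcase

end TelegraphReset
end
end

section
/- (Theorem 5.1: moment-generating function.) Let z ∈ ℝ satisfy z ≠ 0, v₁z < ξ and v₂z < ξ. Then for every j ∈ {1,2} and every t > 0, e^{(v_jz − ξ)t}/(1 + λt) + ∫_{ℝ} e^{zx}·p̃(x,t|v_j) dx = e^{(v_jz − ξ)t}/(1 + λt) + (ξ/λ)·e^{(ξ − v_jz)/λ}·G_j(z,t) + λe^{−ξt}(e^{v₁zt} − e^{v₂zt})/(z(v₁−v₂)(1+λt)) + (ξ/(z(v₁−v₂)))·( e^{(ξ − v₁z)/λ}·G₁(z,t) − e^{(ξ − v₂z)/λ}·G₂(z,t) ), where G_k(z,t)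 = Γ(0, (ξ − v_kz)/λ, (ξ − v_kz)(1 + λt)/λ) for k = 1,2. The left-hand side is the moment-generating function at z of the reset telegraph process at time t, started at 0 with velocity v_j. -/
/-!
Split `p̃` into its three summands. After the substitution `x = v_j s` the first one contributes
`ξ ∫₀ᵗ e^{-(ξ - v_j z) s} / (1 + λ s) ds`; the second is a constant on `(v₂ t, v₁ t)`. For the
third, `Γ_λ^ξ(x,t)` equals `λ e^{-ξ/λ}` times the integral of `e^{-ξ s} / (1 + λ s)` over the
times `s ∈ (0, t]` with `v₂ s < x < v₁ s`, so Fubini on the cone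
`{(x, s) | 0 < s ≤ t, v₂ s < x < v₁ s}` turns its transform into
`∫₀ᵗ e^{-ξ s} (e^{v₁ z s} - e^{v₂ z s}) / (z (1 + λ s)) ds`. Every integral left is of the form
`∫ e^{-a s} / (1 + λ s) ds`, which `u = a (s + 1/λ)` turns into `Γ(0, ·, ·)`.
-/

open MeasureTheory Real Filter Topology Set

noncomputable section

namespace TelegraphReset

lemma ind_mul_eq_indicator {α : Type*} (p : α → Prop) (f : α → ℝ) (x : α) :
    ind (p x) * f x = {x | p x}.indicator f x := by
  by_cases h : p x <;> simp [ind, h]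

lemma integrable_ind_Ioo_mul {a b : ℝ} {f : ℝ → ℝ} (hf : ContinuousOn f (Icc a b)) :
    Integrable (fun x => ind (a < x ∧ x < b) * f x) := by
  simp_rw [ind_mul_eq_indicator (fun x => a < x ∧ x < b)]
  exact (integrable_indicator_iff measurableSet_Ioo).2
    (hf.integrableOn_Icc.mono_set Ioo_subset_Icc_self)

lemma integral_ind_Ioo_mul {a b : ℝ} (hab : a ≤ b) (f : ℝ → ℝ) :
    ∫ x, ind (a < x ∧ x < b) * f x = ∫ x in a..b, f x := by
  simp_rw [ind_mul_eq_indicator (fun x => a < x ∧ x < b)]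
  rw [Ioo_def, integral_indicator measurableSet_Ioo, intervalIntegral.integral_of_le hab,
    integral_Ioc_eq_integral_Ioo]

lemma integral_exp_const_mul {c : ℝ} (hc : c ≠ 0) (a b : ℝ) :
    ∫ x in a..b, exp (c * x) = (exp (c * b) - exp (c * a)) / c := by
  rw [intervalIntegral.integral_comp_mul_left exp hc, integral_exp, smul_eq_mul, inv_mul_eq_div]

lemma continuousOn_exp_div_one_add_mul {lam : ℝ} (hlam : 0 ≤ lam) (a : ℝ) :
    ContinuousOn (fun s => exp (-(a * s)) / (1 + lam * s)) (Ici 0) :=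
  (by fun_prop : Continuous fun s => exp (-(a * s))).continuousOn.div (by fun_prop)
    fun s (hs : 0 ≤ s) => by positivity

lemma integral_exp_div_one_add_mul {lam a : ℝ} (hlam : lam ≠ 0) (ha : a ≠ 0) (M T : ℝ) :
    ∫ s in M..T, exp (-(a * s)) / (1 + lam * s)
      = exp (a / lam) / lam * iGamma ((M + 1 / lam) * a) ((T + 1 / lam) * a) := by
  set g : ℝ → ℝ := fun u => u⁻¹ * exp (-u)
  have hpt : ∀ s, exp (-(a * s)) / (1 + lam * s)
      = exp (a / lam) / lam * (a • g (a * s + a / lam)) := by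
    intro s
    simp only [g, smul_eq_mul]
    rw [show -(a * s + a / lam) = -(a * s) + -(a / lam) by ring, exp_add, exp_neg (a / lam),
      show a * s + a / lam = a / lam * (1 + lam * s) by field_simp; ring]
    rcases eq_or_ne (1 + lam * s) 0 with h | h
    · simp [h]
    · field_simp
  rw [intervalIntegral.integral_congr fun s _ => hpt s, intervalIntegral.integral_const_mul,
    intervalIntegral.integral_smul, intervalIntegral.smul_integral_comp_mul_add, iGamma]
  congr 2 <;> ring

lemma integral_exp_div_one_add_mul_zero {lam a : ℝ} (hlam : lam ≠ 0) (ha : a ≠ 0) (t : ℝ) :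
    ∫ s in (0 : ℝ)..t, exp (-(a * s)) / (1 + lam * s)
      = exp (a / lam) / lam * iGamma (a / lam) (a * (1 + lam * t) / lam) := by
  rw [integral_exp_div_one_add_mul hlam ha]
  congr 2 <;> field_simp <;> ring

/- The three summands of `pTil`: motion at constant velocity since the last reset, no reset up to
time `t`, and a reset followed by a velocity switch. -/
def ballisticPart (w lam xi x t : ℝ) : ℝ :=
  Real.sign w * ind (0 < x / w ∧ x / w < t) * xi * Real.exp (-(xi * (x / w))) / (w + lam * x)

def noResetPart (v₁ v₂ lam xi x t : ℝ) : ℝ :=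
  ind (v₂ * t < x ∧ x < v₁ * t) * lam * Real.exp (-(xi * t)) / ((v₁ - v₂) * (1 + lam * t))

def resetPart (v₁ v₂ lam xi x t : ℝ) : ℝ :=
  ind (min (v₂ * t) 0 < x ∧ x < v₁ * t) * (xi * Real.exp (xi / lam) / (v₁ - v₂)) *
    GamL v₁ v₂ lam xi x t

lemma pTil_eq (v₁ v₂ lam xi : ℝ) (j : ℕ) (x t : ℝ) :
    pTil v₁ v₂ lam xi j x t = ballisticPart (vel v₁ v₂ j) lam xi x t
      + noResetPart v₁ v₂ lam xi x t + resetPart v₁ v₂ lam xi x t := rfl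

lemma sign_div_self {w : ℝ} (hw : w ≠ 0) : Real.sign w / w = |w|⁻¹ := by
  rcases hw.lt_or_gt with h | h
  · rw [Real.sign_of_neg h, abs_of_neg h, inv_neg, neg_div, one_div]
  · rw [Real.sign_of_pos h, abs_of_pos h, one_div]

lemma exp_mul_ballisticPart {w : ℝ} (hw : w ≠ 0) (lam xi z t x : ℝ) :
    exp (z * x) * ballisticPart w lam xi x t
      = |w|⁻¹ * (ind (0 < x / w ∧ x / w < t) *
          (xi * (exp (-((xi - w * z) * (x / w))) / (1 + lam * (x / w))))) := by
  obtain ⟨u, rfl⟩ : ∃ u, x = w * u := ⟨x / w, by field_simp⟩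
  rw [mul_div_cancel_left₀ u hw, ballisticPart, mul_div_cancel_left₀ u hw,
    show w + lam * (w * u) = w * (1 + lam * u) by ring, ← sign_div_self hw,
    show -((xi - w * z) * u) = z * (w * u) + -(xi * u) by ring, exp_add]
  field_simp

lemma integrable_exp_mul_ballisticPart {w lam : ℝ} (hw : w ≠ 0) (hlam : 0 ≤ lam)
    (xi z t : ℝ) : Integrable fun x => exp (z * x) * ballisticPart w lam xi x t := by
  simp_rw [exp_mul_ballisticPart hw]
  have hcont : ContinuousOn (fun u => xi * (exp (-((xi - w * z) * u)) / (1 + lam * u)))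
      (Icc 0 t) :=
    ((continuousOn_exp_div_one_add_mul hlam _).mono Icc_subset_Ici_self).const_smul xi
  exact ((integrable_ind_Ioo_mul hcont).comp_div hw).const_mul _

lemma integral_exp_mul_ballisticPart {w lam xi z : ℝ} (hw : w ≠ 0) (hlam : lam ≠ 0)
    (hwz : w * z ≠ xi) {t : ℝ} (ht : 0 ≤ t) :
    ∫ x, exp (z * x) * ballisticPart w lam xi x t
      = xi / lam * exp ((xi - w * z) / lam) *
          iGamma ((xi - w * z) / lam) ((xi - w * z) * (1 + lam * t) / lam) := by
  simp_rw [exp_mul_ballisticPart hw]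
  rw [integral_const_mul,
    Measure.integral_comp_div (fun u => ind (0 < u ∧ u < t) *
      (xi * (exp (-((xi - w * z) * u)) / (1 + lam * u)))),
    smul_eq_mul, inv_mul_cancel_left₀ (abs_ne_zero.2 hw), integral_ind_Ioo_mul ht,
    intervalIntegral.integral_const_mul,
    integral_exp_div_one_add_mul_zero hlam (sub_ne_zero.2 hwz.symm)]
  ring

lemma exp_mul_noResetPart (v₁ v₂ lam xi z t x : ℝ) :
    exp (z * x) * noResetPart v₁ v₂ lam xi x t
      = ind (v₂ * t < x ∧ x < v₁ * t) *
          (lam * exp (-(xi * t)) / ((v₁ - v₂) * (1 + lam * t)) * exp (z * x)) := by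
  rw [noResetPart]
  ring

lemma integrable_exp_mul_noResetPart (v₁ v₂ lam xi z t : ℝ) :
    Integrable fun x => exp (z * x) * noResetPart v₁ v₂ lam xi x t := by
  simp_rw [exp_mul_noResetPart]
  exact integrable_ind_Ioo_mul (by fun_prop)

lemma integral_exp_mul_noResetPart {v₁ v₂ z t : ℝ} (hv : v₂ < v₁) (hz : z ≠ 0) (ht : 0 ≤ t)
    (lam xi : ℝ) :
    ∫ x, exp (z * x) * noResetPart v₁ v₂ lam xi x t
      = lam * exp (-(xi * t)) * (exp (v₁ * z * t) - exp (v₂ * z * t)) /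
          (z * (v₁ - v₂) * (1 + lam * t)) := by
  simp_rw [exp_mul_noResetPart]
  rw [integral_ind_Ioo_mul (by nlinarith), intervalIntegral.integral_const_mul,
    integral_exp_const_mul hz, show z * (v₁ * t) = v₁ * z * t by ring,
    show z * (v₂ * t) = v₂ * z * t by ring, div_mul_div_comm]
  ring

def cone (v₁ v₂ t : ℝ) : Set (ℝ × ℝ) := {q | q.2 ∈ Ioc 0 t ∧ q.1 ∈ Ioo (v₂ * q.2) (v₁ * q.2)}

lemma measurableSet_cone (v₁ v₂ t : ℝ) : MeasurableSet (cone v₁ v₂ t) := by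
  unfold cone
  measurability

lemma cone_subset (v₁ v₂ t : ℝ) :
    cone v₁ v₂ t ⊆ Icc (-(|v₂| * t)) (|v₁| * t) ×ˢ Icc 0 t := by
  rintro ⟨x, s⟩ ⟨⟨hs, hst⟩, hx₂, hx₁⟩
  refine ⟨⟨?_, ?_⟩, hs.le, hst⟩
  · nlinarith [mul_le_mul_of_nonneg_left hst (abs_nonneg v₂), neg_abs_le v₂]
  · nlinarith [mul_le_mul_of_nonneg_left hst (abs_nonneg v₁), le_abs_self v₁]

lemma integrable_indicator_cone {v₁ v₂ t : ℝ} {f : ℝ × ℝ → ℝ}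
    (hf : ContinuousOn f (Icc (-(|v₂| * t)) (|v₁| * t) ×ˢ Icc 0 t)) :
    Integrable ((cone v₁ v₂ t).indicator f) :=
  (integrable_indicator_iff (measurableSet_cone v₁ v₂ t)).2
    ((hf.integrableOn_compact (isCompact_Icc.prod isCompact_Icc)).mono_set (cone_subset v₁ v₂ t))

lemma integral_indicator_cone_fst {v₁ v₂ : ℝ} (hv : v₂ ≤ v₁) (t : ℝ) (f : ℝ × ℝ → ℝ) (s : ℝ) :
    ∫ x, (cone v₁ v₂ t).indicator f (x, s)
      = (Ioc 0 t).indicator (fun s => ∫ x in v₂ * s..v₁ * s, f (x, s)) s := by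
  by_cases hs : 0 < s ∧ s ≤ t
  · have hsec : (fun x => (cone v₁ v₂ t).indicator f (x, s))
        = (Ioo (v₂ * s) (v₁ * s)).indicator fun x => f (x, s) := by
      ext x
      simp [indicator_apply, cone, hs]
    rw [hsec, integral_indicator measurableSet_Ioo, indicator_of_mem (show s ∈ Ioc 0 t from hs),
      intervalIntegral.integral_of_le (by nlinarith), integral_Ioc_eq_integral_Ioo]
  · simp [cone, hs]

lemma integral_indicator_cone_snd (v₁ v₂ t : ℝ) (f : ℝ × ℝ → ℝ) (x : ℝ) :
    ∫ s, (cone v₁ v₂ t).indicator f (x, s) = ∫ s in {s | (x, s) ∈ cone v₁ v₂ t}, f (x, s) :=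
  integral_indicator (f := fun s => f (x, s)) (measurable_prodMk_left (measurableSet_cone v₁ v₂ t))

lemma iGamma_eq_setIntegral_Ioc {lam xi : ℝ} (hlam : lam ≠ 0) (hxi : xi ≠ 0) {L U : ℝ}
    (hLU : L ≤ U) :
    iGamma ((L + 1 / lam) * xi) ((U + 1 / lam) * xi)
      = lam * exp (-(xi / lam)) * ∫ s in Ioc L U, exp (-(xi * s)) / (1 + lam * s) := by
  rw [← intervalIntegral.integral_of_le hLU, integral_exp_div_one_add_mul hlam hxi, exp_neg]
  field_simp

section GamL

variable {v₁ v₂ lam xi : ℝ} (hlam : lam ≠ 0) (hxi : xi ≠ 0) {t : ℝ} (ht : 0 ≤ t) (x : ℝ)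
include hlam hxi ht

lemma ind_mul_GamL_of_neg (hv₁ : 0 < v₁) (hv₂ : v₂ < 0) :
    ind (min (v₂ * t) 0 < x ∧ x < v₁ * t) * GamL v₁ v₂ lam xi x t
      = lam * exp (-(xi / lam)) *
          ∫ s in {s | (x, s) ∈ cone v₁ v₂ t}, exp (-(xi * s)) / (1 + lam * s) := by
  set M := max (x / v₁) (x / v₂)
  have hsec : {s | (x, s) ∈ cone v₁ v₂ t} = Ioc (max 0 M) t := by
    ext s
    simp only [← Ioc_inter_Ioi, cone, mem_ofPred_eq, mem_inter_iff, mem_Ioo, mem_Ioi, M,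
      max_lt_iff, div_lt_iff₀ hv₁, div_lt_iff_of_neg hv₂, mul_comm s]
    tauto
  rw [hsec, min_eq_left (mul_nonpos_of_nonpos_of_nonneg hv₂.le ht)]
  by_cases hx : v₂ * t < x ∧ x < v₁ * t
  · have hM₀ : 0 ≤ M := by
      rcases le_total 0 x with h | h
      · exact le_max_of_le_left (div_nonneg h hv₁.le)
      · exact le_max_of_le_right (div_nonneg_of_nonpos h hv₂.le)
    have hMt : M < t :=
      max_lt ((div_lt_iff₀ hv₁).2 (by linarith)) ((div_lt_iff_of_neg hv₂).2 (by linarith))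
    rw [ind, if_pos hx, one_mul, GamL, if_pos hv₂, max_eq_right hM₀,
      iGamma_eq_setIntegral_Ioc hlam hxi hMt.le]
  · have htM : t ≤ M := not_lt.1 fun h => hx
      ⟨by linarith [(div_lt_iff_of_neg hv₂).1 (max_lt_iff.1 h).2],
        by linarith [(div_lt_iff₀ hv₁).1 (max_lt_iff.1 h).1]⟩
    rw [ind, if_neg hx, zero_mul, Ioc_eq_empty_of_le (htM.trans (le_max_right _ _)),
      Measure.restrict_empty, integral_zero_measure, mul_zero]

lemma ind_mul_GamL_of_pos (hv : v₂ < v₁) (hv₂ : 0 < v₂) :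
    ind (min (v₂ * t) 0 < x ∧ x < v₁ * t) * GamL v₁ v₂ lam xi x t
      = lam * exp (-(xi / lam)) *
          ∫ s in {s | (x, s) ∈ cone v₁ v₂ t}, exp (-(xi * s)) / (1 + lam * s) := by
  have hv₁ : 0 < v₁ := hv₂.trans hv
  have hsec : {s | (x, s) ∈ cone v₁ v₂ t} = Ioc 0 t ∩ Ioo (x / v₁) (x / v₂) := by
    ext s
    simp only [cone, mem_ofPred_eq, mem_inter_iff, mem_Ioo, div_lt_iff₀ hv₁, lt_div_iff₀ hv₂,
      mul_comm s]
    tauto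
  have hae : {s | (x, s) ∈ cone v₁ v₂ t} =ᵐ[volume] Ioc (max 0 (x / v₁)) (min t (x / v₂)) := by
    rw [hsec, ← Ioc_inter_Ioc]
    exact (ae_eq_refl _).inter Ioo_ae_eq_Ioc
  rw [setIntegral_congr_set hae, min_eq_right (mul_nonneg hv₂.le ht)]
  by_cases hx : 0 < x ∧ x < v₁ * t
  · have h₀ : 0 < x / v₁ := div_pos hx.1 hv₁
    have h₂ : x / v₁ < x / v₂ := div_lt_div_of_pos_left hx.1 hv₂ hv
    have hxt : x / v₁ < t := (div_lt_iff₀ hv₁).2 (by linarith)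
    rw [ind, if_pos hx, one_mul, GamL, if_neg (not_lt.2 hv₂.le), max_eq_right h₀.le,
      min_comm (x / v₂), iGamma_eq_setIntegral_Ioc hlam hxi (le_min hxt.le h₂.le)]
  · have hempty : min t (x / v₂) ≤ max 0 (x / v₁) := by
      rcases le_or_gt x 0 with h | h
      · exact (min_le_right _ _).trans ((div_nonpos_of_nonpos_of_nonneg h hv₂.le).trans
          (le_max_left _ _))
      · have : v₁ * t ≤ x := not_lt.1 fun h' => hx ⟨h, h'⟩
        exact (min_le_left _ _).trans (((le_div_iff₀ hv₁).2 (by linarith)).trans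
          (le_max_right _ _))
    rw [ind, if_neg hx, zero_mul, Ioc_eq_empty_of_le hempty,
      Measure.restrict_empty, integral_zero_measure, mul_zero]

lemma ind_mul_GamL (hv₁ : 0 < v₁) (hv : v₂ < v₁) (hv₂ : v₂ ≠ 0) :
    ind (min (v₂ * t) 0 < x ∧ x < v₁ * t) * GamL v₁ v₂ lam xi x t
      = lam * exp (-(xi / lam)) *
          ∫ s in {s | (x, s) ∈ cone v₁ v₂ t}, exp (-(xi * s)) / (1 + lam * s) := by
  rcases hv₂.lt_or_gt with h | h
  · exact ind_mul_GamL_of_neg hlam hxi ht x hv₁ h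
  · exact ind_mul_GamL_of_pos hlam hxi ht x hv h

end GamL

lemma integrable_indicator_cone_exp_mul {lam : ℝ} (hlam : 0 ≤ lam) (v₁ v₂ t xi z : ℝ) :
    Integrable ((cone v₁ v₂ t).indicator
      fun q : ℝ × ℝ => exp (z * q.1) * (exp (-(xi * q.2)) / (1 + lam * q.2))) :=
  integrable_indicator_cone <|
    (by fun_prop : Continuous fun q : ℝ × ℝ => exp (z * q.1)).continuousOn.mul
      ((continuousOn_exp_div_one_add_mul hlam xi).comp continuous_snd.continuousOn
        fun _ hq => hq.2.1)

section resetPart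

variable {v₁ v₂ lam xi : ℝ} (hlam : 0 < lam) (hxi : xi ≠ 0) (hv₁ : 0 < v₁) (hv : v₂ < v₁)
  (hv₂ : v₂ ≠ 0) {t : ℝ} (ht : 0 ≤ t) (z : ℝ)
include hlam hxi hv₁ hv hv₂ ht

lemma exp_mul_resetPart (x : ℝ) :
    exp (z * x) * resetPart v₁ v₂ lam xi x t
      = xi * lam / (v₁ - v₂) * ∫ s, (cone v₁ v₂ t).indicator
          (fun q => exp (z * q.1) * (exp (-(xi * q.2)) / (1 + lam * q.2))) (x, s) := by
  rw [integral_indicator_cone_snd]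
  dsimp only
  rw [integral_const_mul, resetPart, mul_right_comm (ind _),
    ind_mul_GamL hlam.ne' hxi ht x hv₁ hv hv₂, exp_neg]
  field_simp

lemma integrable_exp_mul_resetPart :
    Integrable fun x => exp (z * x) * resetPart v₁ v₂ lam xi x t := by
  simp_rw [exp_mul_resetPart hlam hxi hv₁ hv hv₂ ht]
  exact (integrable_indicator_cone_exp_mul hlam.le v₁ v₂ t xi z).integral_prod_left.const_mul _

lemma integral_exp_mul_resetPart (hz : z ≠ 0) (hz₁ : v₁ * z ≠ xi) (hz₂ : v₂ * z ≠ xi) :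
    ∫ x, exp (z * x) * resetPart v₁ v₂ lam xi x t
      = xi / (z * (v₁ - v₂)) *
          (exp ((xi - v₁ * z) / lam) *
              iGamma ((xi - v₁ * z) / lam) ((xi - v₁ * z) * (1 + lam * t) / lam)
            - exp ((xi - v₂ * z) / lam) *
              iGamma ((xi - v₂ * z) / lam) ((xi - v₂ * z) * (1 + lam * t) / lam)) := by
  set F := (cone v₁ v₂ t).indicator
    fun q : ℝ × ℝ => exp (z * q.1) * (exp (-(xi * q.2)) / (1 + lam * q.2))
  have hF : Integrable F := integrable_indicator_cone_exp_mul hlam.le v₁ v₂ t xi z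
  have hint : ∀ a, IntervalIntegrable (fun s => exp (-(a * s)) / (1 + lam * s)) volume 0 t :=
    fun a => ((continuousOn_exp_div_one_add_mul hlam.le a).mono
      (by rw [uIcc_of_le ht]; exact Icc_subset_Ici_self)).intervalIntegrable
  calc ∫ x, exp (z * x) * resetPart v₁ v₂ lam xi x t
      = xi * lam / (v₁ - v₂) * ∫ x, ∫ s, F (x, s) := by
        simp_rw [exp_mul_resetPart hlam hxi hv₁ hv hv₂ ht]
        exact integral_const_mul _ _
    _ = xi * lam / (v₁ - v₂) * ∫ s, ∫ x, F (x, s) := by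
        rw [integral_integral_swap (f := fun x s => F (x, s)) hF]
    _ = xi * lam / (v₁ - v₂) * ∫ s in (0 : ℝ)..t,
          (exp (-((xi - v₁ * z) * s)) / (1 + lam * s)
            - exp (-((xi - v₂ * z) * s)) / (1 + lam * s)) / z := by
        simp_rw [F, integral_indicator_cone_fst hv.le]
        rw [integral_indicator measurableSet_Ioc, ← intervalIntegral.integral_of_le ht]
        congr 1
        refine intervalIntegral.integral_congr fun s _ => ?_
        rw [intervalIntegral.integral_mul_const, integral_exp_const_mul hz,
          show -((xi - v₁ * z) * s) = z * (v₁ * s) + -(xi * s) by ring,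
          show -((xi - v₂ * z) * s) = z * (v₂ * s) + -(xi * s) by ring, exp_add, exp_add]
        ring
    _ = _ := by
        rw [intervalIntegral.integral_div, intervalIntegral.integral_sub (hint _) (hint _),
          integral_exp_div_one_add_mul_zero hlam.ne' (sub_ne_zero.2 hz₁.symm),
          integral_exp_div_one_add_mul_zero hlam.ne' (sub_ne_zero.2 hz₂.symm)]
        field_simp

end resetPart

lemma vel_eq_or (v₁ v₂ : ℝ) (j : ℕ) : vel v₁ v₂ j = v₁ ∨ vel v₁ v₂ j = v₂ := by
  unfold vel
  split_ifs <;> simp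

theorem mgf_general (v₁ v₂ lam xi : ℝ) (hlam : 0 < lam) (hxi : 0 < xi)
    (hv : v₂ < v₁) (hv2 : v₂ ≠ 0)
    (hcase : (v₂ < 0 ∧ 0 < v₁) ∨ (0 < v₂ ∧ v₂ < v₁))
    (z : ℝ) (hz : z ≠ 0) (hz1 : v₁ * z < xi) (hz2 : v₂ * z < xi) :
    ∀ j : ℕ, (j = 1 ∨ j = 2) → ∀ t : ℝ, 0 < t →
      Real.exp ((vel v₁ v₂ j * z - xi) * t) / (1 + lam * t)
        + ∫ x : ℝ, Real.exp (z * x) * pTil v₁ v₂ lam xi j x t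
      = Real.exp ((vel v₁ v₂ j * z - xi) * t) / (1 + lam * t)
        + xi / lam * Real.exp ((xi - vel v₁ v₂ j * z) / lam) *
            iGamma ((xi - vel v₁ v₂ j * z) / lam)
              ((xi - vel v₁ v₂ j * z) * (1 + lam * t) / lam)
        + lam * Real.exp (-(xi * t)) *
            (Real.exp (v₁ * z * t) - Real.exp (v₂ * z * t)) /
            (z * (v₁ - v₂) * (1 + lam * t))
        + xi / (z * (v₁ - v₂)) *
            (Real.exp ((xi - v₁ * z) / lam) *
                iGamma ((xi - v₁ * z) / lam) ((xi - v₁ * z) * (1 + lam * t) / lam)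
              - Real.exp ((xi - v₂ * z) / lam) *
                  iGamma ((xi - v₂ * z) / lam)
                    ((xi - v₂ * z) * (1 + lam * t) / lam)) := by
  intro j _ t ht
  have hv₁ : 0 < v₁ := by rcases hcase with h | h <;> linarith [h.1, h.2]
  have hw : vel v₁ v₂ j ≠ 0 ∧ vel v₁ v₂ j * z ≠ xi := by
    rcases vel_eq_or v₁ v₂ j with h | h <;> rw [h]
    exacts [⟨hv₁.ne', hz1.ne⟩, ⟨hv2, hz2.ne⟩]
  have hA := integrable_exp_mul_ballisticPart hw.1 hlam.le xi z t
  have hB := integrable_exp_mul_noResetPart v₁ v₂ lam xi z t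
  have hC := integrable_exp_mul_resetPart hlam hxi.ne' hv₁ hv hv2 ht.le z
  have hAB : Integrable fun x =>
      exp (z * x) * ballisticPart (vel v₁ v₂ j) lam xi x t
        + exp (z * x) * noResetPart v₁ v₂ lam xi x t := hA.add hB
  simp only [pTil_eq, mul_add (exp (z * _))]
  rw [integral_add hAB hC, integral_add hA hB,
    integral_exp_mul_ballisticPart hw.1 hlam.ne' hw.2 ht.le,
    integral_exp_mul_noResetPart hv hz ht.le,
    integral_exp_mul_resetPart hlam hxi.ne' hv₁ hv hv2 ht.le z hz hz1.ne hz2.ne]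
  ring

/-- Theorem 5.1: the moment-generating function of the reset telegraph process. -/
theorem mgf (v₁ v₂ lam xi : ℝ) (hlam : 0 < lam) (hxi : 0 < xi)
    (hv : v₂ < v₁) (hv1 : v₁ ≠ 0) (hv2 : v₂ ≠ 0)
    (hcase : (v₂ < 0 ∧ 0 < v₁) ∨ (0 < v₂ ∧ v₂ < v₁))
    (z : ℝ) (hz : z ≠ 0) (hz1 : v₁ * z < xi) (hz2 : v₂ * z < xi) :
    ∀ j : ℕ, (j = 1 ∨ j = 2) → ∀ t : ℝ, 0 < t →
      Real.exp ((vel v₁ v₂ j * z - xi) * t) / (1 + lam * t)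
        + ∫ x : ℝ, Real.exp (z * x) * pTil v₁ v₂ lam xi j x t
      = Real.exp ((vel v₁ v₂ j * z - xi) * t) / (1 + lam * t)
        + xi / lam * Real.exp ((xi - vel v₁ v₂ j * z) / lam) *
            iGamma ((xi - vel v₁ v₂ j * z) / lam)
              ((xi - vel v₁ v₂ j * z) * (1 + lam * t) / lam)
        + lam * Real.exp (-(xi * t)) *
            (Real.exp (v₁ * z * t) - Real.exp (v₂ * z * t)) /
            (z * (v₁ - v₂) * (1 + lam * t))
        + xi / (z * (v₁ - v₂)) *
            (Real.exp ((xi - v₁ * z) / lam) *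
                iGamma ((xi - v₁ * z) / lam) ((xi - v₁ * z) * (1 + lam * t) / lam)
              - Real.exp ((xi - v₂ * z) / lam) *
                  iGamma ((xi - v₂ * z) / lam)
                    ((xi - v₂ * z) * (1 + lam * t) / lam)) :=
  mgf_general v₁ v₂ lam xi hlam hxi hv hv2 hcase z hz hz1 hz2

end TelegraphReset
end
end
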